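/- arXiv:2103.05182 — 2 statements merged into one kernel-verified Lean document; each statement's English description precedes it below -/
import Mathlib

section
/- Let c ∈ (0,1] and let μ be a Borel probability measure on [0,∞) (with log x semi-integrable with respect to μ if c = 1). Then [μ]_c < ∞ if and only if ∫ log(1+x) dμ(x) < ∞. -/
open MeasureTheory Filter Topology
open scoped ENNReal

noncomputable def elogr (t : ℝ) : EReal := if t ≤ 0 then ⊥ else ((Real.log t : ℝ) : EReal)

/-- The Halász–Székely kernel, with values in `[-∞, +∞)` (`EReal`). -/
noncomputable def hsKernel (c x y : ℝ) : EReal :=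
  if c = 0 then ((Real.log y + y⁻¹ * x - 1 : ℝ) : EReal)
  else ((Real.log y : ℝ) : EReal) + ((c⁻¹ : ℝ) : EReal) * elogr (c * y⁻¹ * x + 1 - c)

/-- The nonnegative part of an extended real, as an element of `[0,∞]`. -/
noncomputable def erealToENNReal (x : EReal) : ℝ≥0∞ :=
  if x = ⊤ then ⊤ else ENNReal.ofReal x.toReal

/-- Integral of an `EReal`-valued function: positive part minus negative part. -/
noncomputable def eIntegral (μ : Measure ℝ) (f : ℝ → EReal) : EReal :=
  ((∫⁻ x, erealToENNReal (f x) ∂μ : ℝ≥0∞) : EReal) - ((∫⁻ x, erealToENNReal (-f x) ∂μ : ℝ≥0∞) : EReal)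

/-- Exponential on `EReal`, with values in `[0,∞]`. -/
noncomputable def eexp (x : EReal) : ℝ≥0∞ :=
  if x = ⊤ then ⊤ else if x = ⊥ then 0 else ENNReal.ofReal (Real.exp x.toReal)

/-- The Halász–Székely barycenter `[μ]_c ∈ [0,∞]`. -/
noncomputable def hsBary (c : ℝ) (μ : Measure ℝ) : ℝ≥0∞ :=
  eexp (⨅ y : {y : ℝ // 0 < y}, eIntegral μ (fun x => hsKernel c x y))

/-- The function `B`. -/
noncomputable def hsB (c : ℝ) : ℝ :=
  if c = 0 then 0 else if c = 1 then 1 else c * (1 - c) ^ ((1 - c) / c)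

/-- The uniform probability measure on the entries of a tuple. -/
noncomputable def unifMeasure {n : ℕ} (x : Fin n → ℝ) : Measure ℝ :=
  (n : ℝ≥0∞)⁻¹ • ∑ i, MeasureTheory.Measure.dirac (x i)

/-- The Halász–Székely mean of a tuple. -/
noncomputable def hsMean (c : ℝ) {n : ℕ} (x : Fin n → ℝ) : ℝ≥0∞ := hsBary c (unifMeasure x)

/-- The `k`-th symmetric mean of an `n`-tuple. -/
noncomputable def symMean {n : ℕ} (k : ℕ) (x : Fin n → ℝ) : ℝ :=
  ((∑ s ∈ Finset.univ.powersetCard k, ∏ i ∈ s, x i) / (n.choose k)) ^ ((k : ℝ)⁻¹)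

/-!
For `c < 1` and `x ≥ 0` the kernel is finite, and for fixed `y` it differs from
`c⁻¹ * log (1 + x)` by a bounded amount, since `c * y⁻¹ * x + 1 - c` and `1 + x` agree up to
constant factors. Hence its negative part is always integrable and its positive part is
integrable exactly when `log (1 + x)` is.

For `c = 1` the kernel is `log x`, whose positive part differs from `log (1 + x)` by at most
`log 2`. Semi-integrability excludes the case `∞ - ∞`, which `EReal` evaluates to `⊥`:
it would give the barycenter `0` although `log (1 + x)` is not integrable.
-/

open Real

lemma eexp_lt_top_iff (x : EReal) : eexp x < ⊤ ↔ x ≠ ⊤ := by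
  unfold eexp
  split_ifs <;> simp_all [ENNReal.ofReal_lt_top]

lemma EReal.coe_ennreal_sub_coe_ennreal_ne_top_iff (a b : ℝ≥0∞) :
    (a : EReal) - b ≠ ⊤ ↔ a ≠ ⊤ ∨ b = ⊤ := by
  rcases eq_or_ne b ⊤ with rfl | hb
  · simp
  rcases eq_or_ne a ⊤ with rfl | ha
  · simp [EReal.top_sub, hb]
  lift a to NNReal using ha
  lift b to NNReal using hb
  simp only [ne_eq, ENNReal.coe_ne_top, not_false_eq_true, or_false, iff_true]
  exact_mod_cast EReal.coe_ne_top ((a : ℝ) - b)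

lemma erealToENNReal_coe (r : ℝ) : erealToENNReal r = ENNReal.ofReal r := by
  simp [erealToENNReal]

lemma eIntegral_ne_top_iff (μ : Measure ℝ) (f : ℝ → EReal) :
    eIntegral μ f ≠ ⊤ ↔
      ∫⁻ x, erealToENNReal (f x) ∂μ ≠ ⊤ ∨ ∫⁻ x, erealToENNReal (-f x) ∂μ = ⊤ :=
  EReal.coe_ennreal_sub_coe_ennreal_ne_top_iff _ _

lemma hsBary_lt_top_iff_exists (c : ℝ) (μ : Measure ℝ) :
    hsBary c μ < ⊤ ↔ ∃ y : {y : ℝ // 0 < y}, eIntegral μ (fun x => hsKernel c x y) ≠ ⊤ := by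
  simp [hsBary, eexp_lt_top_iff, iInf_eq_top]

lemma lintegral_ofReal_ne_top_of_ae_le {α : Type*} [MeasurableSpace α] {μ : Measure α}
    [IsFiniteMeasure μ] {f g : α → ℝ} {a C : ℝ} (ha : 0 ≤ a)
    (hfg : ∀ᵐ x ∂μ, f x ≤ a * g x + C) (hg : ∫⁻ x, ENNReal.ofReal (g x) ∂μ ≠ ⊤) :
    ∫⁻ x, ENNReal.ofReal (f x) ∂μ ≠ ⊤ := by
  have hle : ∀ᵐ x ∂μ, ENNReal.ofReal (f x) ≤
      ENNReal.ofReal a * ENNReal.ofReal (g x) + ENNReal.ofReal C :=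
    hfg.mono fun x hx => by
      rw [← ENNReal.ofReal_mul ha]
      exact (ENNReal.ofReal_le_ofReal hx).trans ENNReal.ofReal_add_le
  refine ne_top_of_le_ne_top ?_ (lintegral_mono_ae hle)
  rw [lintegral_add_right _ measurable_const, lintegral_const_mul' _ _ ENNReal.ofReal_ne_top,
    lintegral_const]
  finiteness

lemma lintegral_ofReal_ne_top_of_integrable_max_zero {α : Type*} [MeasurableSpace α]
    {μ : Measure α} {f : α → ℝ}
    (hf : Integrable (fun x => max (f x) 0) μ) : ∫⁻ x, ENNReal.ofReal (f x) ∂μ ≠ ⊤ := by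
  simpa using hf.lintegral_lt_top.ne

lemma abs_log_affine_sub_log_one_add_le {a b x : ℝ} (ha : 0 < a) (hb : 0 < b) (hx : 0 ≤ x) :
    |log (a * x + b) - log (1 + x)| ≤ |log a| + |log b| := by
  have hx1 : 0 < 1 + x := by linarith
  have hmin : min a b * (1 + x) ≤ a * x + b := by
    nlinarith [min_le_left a b, min_le_right a b]
  have hmax : a * x + b ≤ max a b * (1 + x) := by
    nlinarith [le_max_left a b, le_max_right a b]
  have hmin_pos : 0 < min a b := lt_min ha hb
  have hlo : log (min a b) ≤ log (a * x + b) - log (1 + x) := by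
    rw [le_sub_iff_add_le, ← log_mul hmin_pos.ne' hx1.ne']
    exact log_le_log (by positivity) hmin
  have hhi : log (a * x + b) - log (1 + x) ≤ log (max a b) := by
    rw [sub_le_iff_le_add, ← log_mul (by positivity) hx1.ne']
    exact log_le_log (by positivity) hmax
  have hmin_ge : -(|log a| + |log b|) ≤ log (min a b) := by
    rcases min_choice a b with h | h <;> rw [h] <;>
      linarith [neg_abs_le (log a), neg_abs_le (log b), abs_nonneg (log a), abs_nonneg (log b)]
  have hmax_le : log (max a b) ≤ |log a| + |log b| := by
    rcases max_choice a b with h | h <;> rw [h] <;>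
      linarith [le_abs_self (log a), le_abs_self (log b), abs_nonneg (log a), abs_nonneg (log b)]
  exact abs_le.2 ⟨hmin_ge.trans hlo, hhi.trans hmax_le⟩

noncomputable def hsKernelReal (c x y : ℝ) : ℝ := log y + c⁻¹ * log (c * y⁻¹ * x + 1 - c)

lemma hsKernel_of_lt_one {c x y : ℝ} (hc0 : 0 < c) (hc1 : c < 1) (hx : 0 ≤ x) (hy : 0 < y) :
    hsKernel c x y = hsKernelReal c x y := by
  have ht : 0 < c * y⁻¹ * x + 1 - c := by
    have : 0 ≤ c * y⁻¹ * x := by positivity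
    linarith
  rw [hsKernel, if_neg hc0.ne', elogr, if_neg ht.not_ge, hsKernelReal]
  norm_cast

lemma abs_hsKernelReal_sub_inv_mul_log_one_add_le {c x y : ℝ} (hc0 : 0 < c) (hc1 : c < 1)
    (hx : 0 ≤ x) (hy : 0 < y) :
    |hsKernelReal c x y - c⁻¹ * log (1 + x)| ≤
      |log y| + c⁻¹ * (|log (c * y⁻¹)| + |log (1 - c)|) := by
  have hlog := abs_log_affine_sub_log_one_add_le (a := c * y⁻¹) (b := 1 - c)
    (by positivity) (by linarith) hx
  calc |hsKernelReal c x y - c⁻¹ * log (1 + x)|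
      = |log y + c⁻¹ * (log (c * y⁻¹ * x + (1 - c)) - log (1 + x))| := by
        rw [hsKernelReal]; ring_nf
    _ ≤ |log y| + c⁻¹ * |log (c * y⁻¹ * x + (1 - c)) - log (1 + x)| := by
        rw [← abs_of_pos (inv_pos.2 hc0), ← abs_mul, abs_of_pos (inv_pos.2 hc0)]
        exact abs_add_le _ _
    _ ≤ |log y| + c⁻¹ * (|log (c * y⁻¹)| + |log (1 - c)|) := by gcongr

lemma eIntegral_hsKernel_ne_top_iff {c y : ℝ} {μ : Measure ℝ} [IsFiniteMeasure μ]
    (hc0 : 0 < c) (hc1 : c < 1) (hy : 0 < y) (hμ : ∀ᵐ x ∂μ, 0 ≤ x) :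
    eIntegral μ (fun x => hsKernel c x y) ≠ ⊤ ↔
      ∫⁻ x, ENNReal.ofReal (log (1 + x)) ∂μ ≠ ⊤ := by
  set D := |log y| + c⁻¹ * (|log (c * y⁻¹)| + |log (1 - c)|)
  have hk : ∀ᵐ x ∂μ, hsKernel c x y = hsKernelReal c x y :=
    hμ.mono fun x hx => hsKernel_of_lt_one hc0 hc1 hx hy
  have hbound : ∀ᵐ x ∂μ, 0 ≤ log (1 + x) ∧ |hsKernelReal c x y - c⁻¹ * log (1 + x)| ≤ D :=
    hμ.mono fun x hx =>
      ⟨log_nonneg (by linarith), abs_hsKernelReal_sub_inv_mul_log_one_add_le hc0 hc1 hx hy⟩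
  have hpos : ∫⁻ x, erealToENNReal (hsKernel c x y) ∂μ =
      ∫⁻ x, ENNReal.ofReal (hsKernelReal c x y) ∂μ :=
    lintegral_congr_ae (hk.mono fun x hx => by simp only [hx, erealToENNReal_coe])
  have hneg : ∫⁻ x, erealToENNReal (-hsKernel c x y) ∂μ =
      ∫⁻ x, ENNReal.ofReal (-hsKernelReal c x y) ∂μ :=
    lintegral_congr_ae (hk.mono fun x hx => by simp only [hx, ← EReal.coe_neg, erealToENNReal_coe])
  have hneg_ne_top : ∫⁻ x, ENNReal.ofReal (-hsKernelReal c x y) ∂μ ≠ ⊤ := by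
    refine lintegral_ofReal_ne_top_of_ae_le (g := 0) le_rfl (C := D) ?_ (by simp)
    filter_upwards [hbound] with x hx
    have hlower := (abs_le.1 hx.2).1
    have hlog_nonneg : 0 ≤ c⁻¹ * log (1 + x) := mul_nonneg (inv_pos.2 hc0).le hx.1
    simp only [Pi.zero_apply, mul_zero, zero_add]
    linarith
  rw [eIntegral_ne_top_iff, hpos, hneg, or_iff_left hneg_ne_top]
  constructor
  · refine lintegral_ofReal_ne_top_of_ae_le hc0.le (C := c * D) ?_
    filter_upwards [hbound] with x hx
    have h := mul_le_mul_of_nonneg_left (abs_le.1 hx.2).1 hc0.le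
    rw [mul_sub, ← mul_assoc, mul_inv_cancel₀ hc0.ne', one_mul] at h
    linarith
  · refine lintegral_ofReal_ne_top_of_ae_le (inv_pos.2 hc0).le (C := D) ?_
    filter_upwards [hbound] with x hx
    linarith [(abs_le.1 hx.2).2]

lemma hsKernel_one_of_pos {x y : ℝ} (hx : 0 < x) (hy : 0 < y) :
    hsKernel 1 x y = ((log x : ℝ) : EReal) := by
  have ht : 1 * y⁻¹ * x + 1 - 1 = y⁻¹ * x := by ring
  have hpos : 0 < y⁻¹ * x := by positivity
  rw [hsKernel, if_neg one_ne_zero, elogr, ht, if_neg hpos.not_ge, log_mul (by positivity) hx.ne',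
    log_inv]
  norm_cast
  ring

lemma erealToENNReal_hsKernel_one {x y : ℝ} (hx : 0 ≤ x) (hy : 0 < y) :
    erealToENNReal (hsKernel 1 x y) = ENNReal.ofReal (log x) := by
  rcases hx.eq_or_lt with rfl | hx
  · simp [hsKernel, elogr, erealToENNReal]
  · rw [hsKernel_one_of_pos hx hy, erealToENNReal_coe]

lemma eIntegral_hsKernel_one_ne_top_iff {y : ℝ} {μ : Measure ℝ} (hy : 0 < y)
    (hμ : ∀ᵐ x ∂μ, 0 ≤ x)
    (hsemi : Integrable (fun x => max (log x) 0) μ ∨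
      (μ {0} = 0 ∧ Integrable (fun x => max (-log x) 0) μ)) :
    eIntegral μ (fun x => hsKernel 1 x y) ≠ ⊤ ↔ ∫⁻ x, ENNReal.ofReal (log x) ∂μ ≠ ⊤ := by
  have hpos : ∫⁻ x, erealToENNReal (hsKernel 1 x y) ∂μ = ∫⁻ x, ENNReal.ofReal (log x) ∂μ :=
    lintegral_congr_ae (hμ.mono fun x hx => erealToENNReal_hsKernel_one hx hy)
  rw [eIntegral_ne_top_iff, hpos]
  rcases hsemi with hint | ⟨h0, hint⟩
  · simp [lintegral_ofReal_ne_top_of_integrable_max_zero hint]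
  · have hμpos : ∀ᵐ x ∂μ, 0 < x := by
      filter_upwards [hμ, measure_eq_zero_iff_ae_notMem.1 h0] with x hx hx0
      exact hx.lt_of_ne (Ne.symm hx0)
    have hneg : ∫⁻ x, erealToENNReal (-hsKernel 1 x y) ∂μ = ∫⁻ x, ENNReal.ofReal (-log x) ∂μ :=
      lintegral_congr_ae (hμpos.mono fun x hx => by
        simp only [hsKernel_one_of_pos hx hy, ← EReal.coe_neg, erealToENNReal_coe])
    rw [hneg, or_iff_left (lintegral_ofReal_ne_top_of_integrable_max_zero hint)]

lemma lintegral_ofReal_log_ne_top_iff {μ : Measure ℝ} [IsFiniteMeasure μ]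
    (hμ : ∀ᵐ x ∂μ, 0 ≤ x) :
    ∫⁻ x, ENNReal.ofReal (log x) ∂μ ≠ ⊤ ↔ ∫⁻ x, ENNReal.ofReal (log (1 + x)) ∂μ ≠ ⊤ := by
  constructor
  · intro h
    have hposLog : ∫⁻ x, ENNReal.ofReal (log⁺ x) ∂μ ≠ ⊤ := by simpa [posLog_def] using h
    refine lintegral_ofReal_ne_top_of_ae_le zero_le_one (C := log 2) ?_ hposLog
    filter_upwards [hμ] with x hx
    have h1 : 1 ≤ |1 + x| := by rw [abs_of_nonneg (by linarith)]; linarith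
    linarith [posLog_eq_log h1, posLog_add (x := 1) (y := x), posLog_one]
  · refine lintegral_ofReal_ne_top_of_ae_le zero_le_one (C := 0) ?_
    filter_upwards [hμ] with x hx
    rcases hx.eq_or_lt with rfl | hx
    · simp
    · linarith [log_le_log hx (by linarith : x ≤ 1 + x)]

/-- for `c ∈ (0,1]`, `[μ]_c < ∞` iff `∫ log(1+x) dμ < ∞`. -/
theorem hsBary_lt_top_iff (c : ℝ) (hc : c ∈ Set.Ioc (0 : ℝ) 1) (μ : Measure ℝ)
    [IsProbabilityMeasure μ] (hsupp : μ (Set.Iio 0) = 0)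
    (hsemi : c = 1 →
      (Integrable (fun x => max (Real.log x) 0) μ ∨
        (μ {0} = 0 ∧ Integrable (fun x => max (-Real.log x) 0) μ))) :
    hsBary c μ < ⊤ ↔ Integrable (fun x => Real.log (1 + x)) μ := by
  obtain ⟨hc0, hc1⟩ := hc
  have hμ : ∀ᵐ x ∂μ, 0 ≤ x := by simpa using measure_eq_zero_iff_ae_notMem.1 hsupp
  have hfinite : ∀ y : {y : ℝ // 0 < y}, eIntegral μ (fun x => hsKernel c x y) ≠ ⊤ ↔
      ∫⁻ x, ENNReal.ofReal (log (1 + x)) ∂μ ≠ ⊤ := by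
    intro y
    rcases hc1.lt_or_eq with hlt | rfl
    · exact eIntegral_hsKernel_ne_top_iff hc0 hlt y.2 hμ
    · rw [eIntegral_hsKernel_one_ne_top_iff y.2 hμ (hsemi rfl)]
      exact lintegral_ofReal_log_ne_top_iff hμ
  have hlog_nonneg : 0 ≤ᵐ[μ] fun x => log (1 + x) :=
    hμ.mono fun x hx => log_nonneg (by linarith)
  rw [hsBary_lt_top_iff_exists, ← lintegral_ofReal_ne_top_iff_integrable
    (by fun_prop : Measurable fun x : ℝ => log (1 + x)).aestronglyMeasurable hlog_nonneg]
  exact ⟨fun ⟨y, hy⟩ => (hfinite y).1 hy, fun h => ⟨⟨1, one_pos⟩, (hfinite _).2 h⟩⟩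
end

section
/- Let c ∈ (0,1] and let μ be a Borel probability measure on [0,∞) with ∫ log(1+x) dμ(x) < ∞. Then [μ]_c = B(c) · inf_{r>0} { r^{−(1−c)/c} · exp( c⁻¹ ∫ log(x+r) dμ(x) ) }. Furthermore, if μ({0}) < 1 − c, then this infimum is attained at the unique solution ρ ∈ (0,∞) of the equation ∫ x/(x+ρ) dμ(x) = c. -/
open MeasureTheory Filter Topology
open scoped ENNReal

/-!
For `c < 1` the substitution `y = c r / (1 - c)` turns `∫ K(x, y, c) dμ` into
`log B(c) + c⁻¹ (∫ log (x + r) dμ - (1 - c) log r)`. For `c = 1` the kernel is `log x` whatever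
`y` is, and `∫ log x dμ` is the decreasing limit of `∫ log (x + r) dμ` as `r → 0` by monotone
convergence, applied separately to the positive and negative parts.

For the minimiser, `φ(t) = ∫ x / (x + t) dμ` decreases continuously and strictly from
`μ (0, ∞) = 1 - μ {0} > c` to `0`, so `φ(ρ) = c` has exactly one root. Concavity of `log`,
with weights `x / (x + ρ)` and `ρ / (x + ρ)` at the points `1` and `r / ρ`, gives
`log (x + r) - log (x + ρ) ≥ ρ / (x + ρ) · log (r / ρ)`; integrating, and using
`∫ ρ / (x + ρ) dμ = 1 - φ(ρ) = 1 - c`, shows that `ρ` minimises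
`∫ log (x + r) dμ - (1 - c) log r`.
-/

open Set

lemma ae_le_of_measure_Iio_eq_zero {μ : Measure ℝ} {a : ℝ} (hsupp : μ (Iio a) = 0) :
    ∀ᵐ x ∂μ, a ≤ x :=
  (measure_eq_zero_iff_ae_notMem.1 hsupp).mono fun _ hx => not_lt.1 hx

lemma measureReal_Ioi_eq_one_sub {μ : Measure ℝ} [IsProbabilityMeasure μ] {a : ℝ}
    (hsupp : μ (Iio a) = 0) : μ.real (Ioi a) = 1 - μ.real {a} := by
  have hIic : μ (Iic a) = μ {a} := by
    rw [← Iio_union_right]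
    exact le_antisymm ((measure_union_le _ _).trans (by rw [hsupp, zero_add]))
      (measure_mono subset_union_right)
  rw [← compl_Iic, probReal_compl_eq_one_sub measurableSet_Iic, measureReal_def,
    measureReal_def, hIic]

section ERealFacts

lemma erealToENNReal_eq_toENNReal : erealToENNReal = EReal.toENNReal := rfl

lemma eexp_eq_exp : eexp = EReal.exp := by
  funext x
  induction x using EReal.rec <;> simp [eexp]

lemma elogr_eq_log_ofReal (t : ℝ) : elogr t = ENNReal.log (ENNReal.ofReal t) :=
  (ENNReal.log_ofReal t).symm

lemma elogr_of_pos {t : ℝ} (ht : 0 < t) : elogr t = Real.log t := by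
  rw [elogr, if_neg ht.not_ge]

lemma continuous_elogr : Continuous elogr := by
  simp only [funext elogr_eq_log_ofReal]
  exact ENNReal.continuous_log.comp ENNReal.continuous_ofReal

lemma monotone_elogr : Monotone elogr := fun _ _ h => by
  simp only [elogr_eq_log_ofReal]
  exact ENNReal.log_monotone (ENNReal.ofReal_le_ofReal h)

lemma eexp_iInf_log {ι : Sort*} [Nonempty ι] {g : ι → ℝ} (hg : ∀ i, 0 < g i) :
    eexp (⨅ i, ((Real.log (g i) : ℝ) : EReal)) = ENNReal.ofReal (⨅ i, g i) := by
  rw [eexp_eq_exp, ← EReal.expOrderIso_apply, OrderIso.map_iInf, ENNReal.ofReal_iInf]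
  simp [Real.exp_log (hg _)]

end ERealFacts

section eIntegral

variable {μ : Measure ℝ}

lemma eIntegral_congr_ae {f g : ℝ → EReal} (h : f =ᵐ[μ] g) :
    eIntegral μ f = eIntegral μ g := by
  unfold eIntegral
  congr 2
  · exact lintegral_congr_ae (h.fun_comp erealToENNReal)
  · exact lintegral_congr_ae (h.neg.fun_comp erealToENNReal)

lemma eIntegral_mono_ae {f g : ℝ → EReal} (h : f ≤ᵐ[μ] g) :
    eIntegral μ f ≤ eIntegral μ g :=
  EReal.sub_le_sub
    (EReal.coe_ennreal_le_coe_ennreal_iff.2 <| lintegral_mono_ae <|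
      h.mono fun _ hx => EReal.toENNReal_le_toENNReal hx)
    (EReal.coe_ennreal_le_coe_ennreal_iff.2 <| lintegral_mono_ae <|
      h.mono fun _ hx => EReal.toENNReal_le_toENNReal (EReal.neg_le_neg_iff.2 hx))

lemma eIntegral_coe {f : ℝ → ℝ} (hf : Integrable f μ) :
    eIntegral μ (fun x => (f x : EReal)) = ((∫ x, f x ∂μ : ℝ) : EReal) := by
  have hpos := hf.lintegral_lt_top.ne
  have hneg : ∫⁻ x, ENNReal.ofReal (-f x) ∂μ ≠ ⊤ := hf.neg.lintegral_lt_top.ne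
  simp only [eIntegral, erealToENNReal_eq_toENNReal, ← EReal.coe_neg, EReal.real_coe_toENNReal]
  rw [← EReal.coe_ennreal_toReal hpos, ← EReal.coe_ennreal_toReal hneg, ← EReal.coe_sub,
    integral_eq_lintegral_pos_part_sub_lintegral_neg_part hf]

/-- The positive parts decrease and the negative parts increase; since the limiting positive part
is finite, `EReal` subtraction is continuous at the limit. -/
lemma eIntegral_eq_iInf_of_antitone {F : ℕ → ℝ → EReal} {f : ℝ → EReal}
    (hF : ∀ n, AEMeasurable (F n) μ) (hanti : ∀ᵐ x ∂μ, Antitone fun n => F n x)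
    (hlim : ∀ᵐ x ∂μ, Tendsto (fun n => F n x) atTop (𝓝 (f x)))
    (hfin : ∫⁻ x, (F 0 x).toENNReal ∂μ ≠ ⊤) :
    eIntegral μ f = ⨅ n, eIntegral μ (F n) := by
  set A : ℕ → ℝ≥0∞ := fun n => ∫⁻ x, (F n x).toENNReal ∂μ
  set B : ℕ → ℝ≥0∞ := fun n => ∫⁻ x, (-F n x).toENNReal ∂μ
  have hposF : ∀ᵐ x ∂μ, Antitone fun n => (F n x).toENNReal :=
    hanti.mono fun x hx n m h => EReal.toENNReal_le_toENNReal (hx h)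
  have hnegF : ∀ᵐ x ∂μ, Monotone fun n => (-F n x).toENNReal :=
    hanti.mono fun x hx n m h => EReal.toENNReal_le_toENNReal (EReal.neg_le_neg_iff.2 (hx h))
  have hmeas := EReal.continuous_toENNReal.measurable
  have hposM : ∀ n, AEMeasurable (fun x => (F n x).toENNReal) μ :=
    fun n => hmeas.comp_aemeasurable (hF n)
  have hnegM : ∀ n, AEMeasurable (fun x => (-F n x).toENNReal) μ :=
    fun n => hmeas.comp_aemeasurable (hF n).neg
  have hpos : ∫⁻ x, (f x).toENNReal ∂μ = ⨅ n, A n := by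
    rw [← lintegral_iInf' hposM hposF hfin]
    refine lintegral_congr_ae (hposF.and hlim |>.mono fun x ⟨hx, hxlim⟩ => ?_)
    exact tendsto_nhds_unique ((EReal.continuous_toENNReal.tendsto _).comp hxlim)
      (tendsto_atTop_iInf hx)
  have hneg : ∫⁻ x, (-f x).toENNReal ∂μ = ⨆ n, B n := by
    rw [← lintegral_iSup' hnegM hnegF]
    refine lintegral_congr_ae (hnegF.and hlim |>.mono fun x ⟨hx, hxlim⟩ => ?_)
    exact tendsto_nhds_unique
      ((EReal.continuous_toENNReal.tendsto _).comp (continuous_neg.tendsto _ |>.comp hxlim))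
      (tendsto_atTop_iSup hx)
  have hI : Antitone fun n => eIntegral μ (F n) := fun n m h =>
    eIntegral_mono_ae (hanti.mono fun x hx => hx h)
  refine tendsto_nhds_unique ?_ (tendsto_atTop_iInf hI)
  simp only [eIntegral, erealToENNReal_eq_toENNReal, hpos, hneg]
  have hAlim : Tendsto (fun n => (A n : EReal)) atTop (𝓝 (⨅ n, A n : ℝ≥0∞)) :=
    (continuous_coe_ennreal_ereal.tendsto _).comp
      (tendsto_atTop_iInf fun n m h => lintegral_mono_ae (hposF.mono fun x hx => hx h))
  have hBlim : Tendsto (fun n => -(B n : EReal)) atTop (𝓝 (-(⨆ n, B n : ℝ≥0∞))) :=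
    (continuous_neg.tendsto _).comp <| (continuous_coe_ennreal_ereal.tendsto _).comp
      (tendsto_atTop_iSup fun n m h => lintegral_mono_ae (hnegF.mono fun x hx => hx h))
  have hne_top : ((⨅ n, A n : ℝ≥0∞) : EReal) ≠ ⊤ :=
    (EReal.coe_ennreal_eq_top_iff.not).2 <| ne_top_of_le_ne_top hfin (iInf_le A 0)
  exact (EReal.continuousAt_add (Or.inl hne_top) (Or.inl (EReal.coe_ennreal_ne_bot _))).tendsto.comp
    (hAlim.prodMk_nhds hBlim)

end eIntegral

section LogMoment

variable {μ : Measure ℝ}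

lemma integrable_log_add [IsFiniteMeasure μ] (h0 : ∀ᵐ x ∂μ, 0 ≤ x)
    (hint : Integrable (fun x => Real.log (1 + x)) μ) {r : ℝ} (hr : 0 < r) :
    Integrable (fun x => Real.log (x + r)) μ := by
  refine (hint.add (integrable_const (|Real.log r| + Real.log (1 + r)))).mono'
    (Real.measurable_log.comp (measurable_add_const r)).aestronglyMeasurable
    (h0.mono fun x hx => ?_)
  have hlow : Real.log r ≤ Real.log (x + r) := Real.log_le_log hr (by linarith)
  have hup : Real.log (x + r) ≤ Real.log (1 + x) + Real.log (1 + r) := by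
    rw [← Real.log_mul (by positivity) (by positivity)]
    exact Real.log_le_log (by positivity) (by nlinarith)
  have h1 : 0 ≤ Real.log (1 + x) := Real.log_nonneg (by linarith)
  have h2 : 0 ≤ Real.log (1 + r) := Real.log_nonneg (by linarith)
  rw [Pi.add_apply, Real.norm_eq_abs, abs_le]
  constructor <;> linarith [neg_abs_le (Real.log r), le_abs_self (Real.log r)]

lemma eIntegral_elogr [IsFiniteMeasure μ] (h0 : ∀ᵐ x ∂μ, 0 ≤ x)
    (hint : Integrable (fun x => Real.log (1 + x)) μ) :
    eIntegral μ elogr =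
      ⨅ r : {r : ℝ // 0 < r}, ((∫ x, Real.log (x + r) ∂μ : ℝ) : EReal) := by
  have hshift : ∀ r : ℝ, 0 < r →
      eIntegral μ (fun x => elogr (x + r)) = ((∫ x, Real.log (x + r) ∂μ : ℝ) : EReal) :=
    fun r hr => by
      rw [← eIntegral_coe (integrable_log_add h0 hint hr)]
      exact eIntegral_congr_ae (h0.mono fun x hx => elogr_of_pos (by linarith))
  refine le_antisymm (le_iInf fun r => hshift r r.2 ▸ ?_) ?_
  · exact eIntegral_mono_ae (h0.mono fun x hx => monotone_elogr (by linarith [r.2]))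
  set r : ℕ → ℝ := fun n => 1 / (n + 1)
  have hr : ∀ n, 0 < r n := fun n => Nat.one_div_pos_of_nat
  have hanti : Antitone r := fun n m h => Nat.one_div_le_one_div h
  rw [eIntegral_eq_iInf_of_antitone (F := fun n x => elogr (x + r n))]
  · exact le_iInf fun n => (iInf_le _ ⟨r n, hr n⟩).trans (hshift _ (hr n)).ge
  · exact fun n => (continuous_elogr.measurable.comp (measurable_add_const _)).aemeasurable
  · exact ae_of_all _ fun x n m h => monotone_elogr (by linarith [hanti h])
  · refine ae_of_all _ fun x => continuous_elogr.continuousAt.tendsto.comp ?_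
    have hlim : Tendsto r atTop (𝓝 0) := tendsto_one_div_add_atTop_nhds_zero_nat
    simpa using hlim.const_add x
  · refine (lintegral_congr_ae (h0.mono fun x hx => ?_)).trans_ne
      (integrable_log_add h0 hint (hr 0)).lintegral_lt_top.ne
    simp only [elogr_of_pos (by linarith [hr 0] : 0 < x + r 0), EReal.real_coe_toENNReal]

end LogMoment

section Kernel

noncomputable def hsObjective (c : ℝ) (μ : Measure ℝ) (r : ℝ) : ℝ :=
  r ^ (-(1 - c) / c) * Real.exp (c⁻¹ * ∫ x, Real.log (x + r) ∂μ)

variable {c : ℝ} {μ : Measure ℝ}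

lemma hsObjective_pos {r : ℝ} (hr : 0 < r) : 0 < hsObjective c μ r :=
  mul_pos (Real.rpow_pos_of_pos hr _) (Real.exp_pos _)

lemma log_hsObjective {r : ℝ} (hr : 0 < r) :
    Real.log (hsObjective c μ r) =
      c⁻¹ * ((∫ x, Real.log (x + r) ∂μ) - (1 - c) * Real.log r) := by
  rw [hsObjective, Real.log_mul (Real.rpow_pos_of_pos hr _).ne' (Real.exp_pos _).ne',
    Real.log_rpow hr, Real.log_exp]
  ring

lemma hsB_pos (hc : c ∈ Ioc 0 1) : 0 < hsB c := by
  unfold hsB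
  split_ifs with h0 h1
  · exact absurd h0 hc.1.ne'
  · exact one_pos
  · have : 0 < 1 - c := sub_pos.2 (hc.2.lt_of_ne h1)
    have := hc.1
    positivity

lemma log_hsB (hc0 : 0 < c) (hc1 : c < 1) :
    Real.log (hsB c) = Real.log c + (1 - c) / c * Real.log (1 - c) := by
  rw [hsB, if_neg hc0.ne', if_neg hc1.ne, Real.log_mul hc0.ne'
    (Real.rpow_pos_of_pos (sub_pos.2 hc1) _).ne', Real.log_rpow (sub_pos.2 hc1)]

lemma hsKernel_one {x y : ℝ} (hx : 0 ≤ x) (hy : 0 < y) : hsKernel 1 x y = elogr x := by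
  rw [hsKernel, if_neg one_ne_zero]
  simp only [inv_one, EReal.coe_one, one_mul, add_sub_cancel_right]
  rcases hx.eq_or_lt with rfl | hx
  · simp [elogr]
  · rw [elogr_of_pos (by positivity), elogr_of_pos hx, ← EReal.coe_add,
      Real.log_mul (by positivity) hx.ne', Real.log_inv, add_neg_cancel_left]

lemma hsKernel_reparam (hc0 : 0 < c) (hc1 : c < 1) {x r : ℝ} (hx : 0 ≤ x) (hr : 0 < r) :
    hsKernel c x (c * r / (1 - c)) =
      ((Real.log (hsB c) - (1 - c) / c * Real.log r + c⁻¹ * Real.log (x + r) : ℝ) :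
        EReal) := by
  have h1c : 0 < 1 - c := sub_pos.2 hc1
  have harg : c * (c * r / (1 - c))⁻¹ * x + 1 - c = (1 - c) / r * (x + r) := by
    field_simp
    ring
  rw [hsKernel, if_neg hc0.ne', harg, elogr_of_pos (by positivity), ← EReal.coe_mul,
    ← EReal.coe_add, EReal.coe_eq_coe_iff, log_hsB hc0 hc1,
    Real.log_mul (div_pos h1c hr).ne' (by positivity), Real.log_div h1c.ne' hr.ne',
    Real.log_div (by positivity) h1c.ne', Real.log_mul hc0.ne' hr.ne']
  field_simp
  ring

end Kernel

section Barycenter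

variable {c : ℝ} {μ : Measure ℝ} [IsProbabilityMeasure μ]

lemma iInf_eIntegral_hsKernel (hc : c ∈ Ioc 0 1) (h0 : ∀ᵐ x ∂μ, 0 ≤ x)
    (hint : Integrable (fun x => Real.log (1 + x)) μ) :
    ⨅ y : {y : ℝ // 0 < y}, eIntegral μ (fun x => hsKernel c x y) =
      ⨅ r : {r : ℝ // 0 < r}, ((Real.log (hsB c * hsObjective c μ r) : ℝ) : EReal) := by
  rcases hc.2.lt_or_eq with hc1 | rfl
  · have h1c : 0 < 1 - c := sub_pos.2 hc1
    let e : {r : ℝ // 0 < r} → {y : ℝ // 0 < y} :=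
      fun r => ⟨c * r / (1 - c), by have := hc.1; have := r.2; positivity⟩
    have he : Function.Surjective e := fun y =>
      ⟨⟨(1 - c) * y / c, by have := hc.1; have := y.2; positivity⟩,
        Subtype.ext (by have := hc.1.ne'; simp only [e]; field_simp)⟩
    rw [← he.iInf_comp]
    refine iInf_congr fun r => ?_
    have hker : (fun x => hsKernel c x (e r)) =ᵐ[μ] fun x =>
        ((Real.log (hsB c) - (1 - c) / c * Real.log r + c⁻¹ * Real.log (x + r) : ℝ) : EReal) :=
      h0.mono fun x hx => hsKernel_reparam hc.1 hc1 hx r.2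
    have hlog := integrable_log_add h0 hint r.2
    have hG : Integrable (fun x =>
        Real.log (hsB c) - (1 - c) / c * Real.log r + c⁻¹ * Real.log (x + r)) μ :=
      (integrable_const _).add (hlog.const_mul _)
    rw [eIntegral_congr_ae hker, eIntegral_coe hG,
      Real.log_mul (hsB_pos hc).ne' (hsObjective_pos r.2).ne', log_hsObjective r.2,
      integral_add (integrable_const _) (hlog.const_mul _),
      integral_const_mul, integral_const]
    simp only [probReal_univ, smul_eq_mul, one_mul]
    congr 1
    ring
  · have hker : ∀ y : {y : ℝ // 0 < y},
        eIntegral μ (fun x => hsKernel 1 x y) = eIntegral μ elogr :=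
      fun y => eIntegral_congr_ae (h0.mono fun x hx => hsKernel_one hx y.2)
    simp only [hker, iInf_const, eIntegral_elogr h0 hint, hsB, if_neg one_ne_zero, if_true,
      one_mul, log_hsObjective (Subtype.prop _), inv_one, sub_self, zero_mul, sub_zero]

lemma hsBary_eq_ofReal_hsB_mul_iInf (hc : c ∈ Ioc 0 1) (h0 : ∀ᵐ x ∂μ, 0 ≤ x)
    (hint : Integrable (fun x => Real.log (1 + x)) μ) :
    hsBary c μ = ENNReal.ofReal (hsB c * ⨅ r : {r : ℝ // 0 < r}, hsObjective c μ r) := by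
  rw [hsBary, iInf_eIntegral_hsKernel hc h0 hint,
    eexp_iInf_log fun r => mul_pos (hsB_pos hc) (hsObjective_pos r.2),
    Real.mul_iInf_of_nonneg (hsB_pos hc).le]

end Barycenter

section RatioMean

noncomputable def ratioMean (μ : Measure ℝ) (t : ℝ) : ℝ := ∫ x, x / (x + t) ∂μ

variable {μ : Measure ℝ}

lemma norm_div_add_le_one {x t : ℝ} (hx : 0 ≤ x) (ht : 0 < t) : ‖x / (x + t)‖ ≤ 1 := by
  rw [Real.norm_eq_abs, abs_of_nonneg (by positivity), div_le_one (by positivity)]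
  linarith

lemma aestronglyMeasurable_div_add (t : ℝ) :
    AEStronglyMeasurable (fun x : ℝ => x / (x + t)) μ :=
  (measurable_id.div (measurable_id.add_const t)).aestronglyMeasurable

lemma integrable_div_add [IsFiniteMeasure μ] (h0 : ∀ᵐ x ∂μ, 0 ≤ x) {t : ℝ}
    (ht : 0 < t) :
    Integrable (fun x => x / (x + t)) μ :=
  (integrable_const 1).mono' (aestronglyMeasurable_div_add t)
    (h0.mono fun _ hx => norm_div_add_le_one hx ht)

lemma continuousOn_ratioMean [IsFiniteMeasure μ] (h0 : ∀ᵐ x ∂μ, 0 ≤ x) :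
    ContinuousOn (ratioMean μ) (Ioi 0) := fun t ht =>
  (continuousAt_of_dominated (bound := fun _ => 1)
    (Eventually.of_forall aestronglyMeasurable_div_add)
    (eventually_gt_nhds ht |>.mono fun _ hs => h0.mono fun _ hx => norm_div_add_le_one hx hs)
    (integrable_const 1)
    (h0.mono fun x hx => continuousAt_const.div (continuousAt_const.add continuousAt_id)
      (by have := ht.out; positivity))).continuousWithinAt

lemma tendsto_ratioMean_nhdsGT_zero [IsFiniteMeasure μ] (h0 : ∀ᵐ x ∂μ, 0 ≤ x) :
    Tendsto (ratioMean μ) (𝓝[>] 0) (𝓝 (μ.real (Ioi 0))) := by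
  rw [← integral_indicator_one measurableSet_Ioi]
  refine tendsto_integral_filter_of_dominated_convergence (fun _ => 1)
    (Eventually.of_forall aestronglyMeasurable_div_add)
    (eventually_mem_nhdsWithin.mono fun _ hs => h0.mono fun _ hx => norm_div_add_le_one hx hs)
    (integrable_const 1) (h0.mono fun x hx => ?_)
  rcases hx.eq_or_lt with rfl | hx
  · simp
  · have : ContinuousAt (fun t => x / (x + t)) 0 :=
      continuousAt_const.div (continuousAt_const.add continuousAt_id) (by simpa using hx.ne')
    simpa [hx, hx.ne'] using this.tendsto.mono_left nhdsWithin_le_nhds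

lemma tendsto_ratioMean_atTop [IsFiniteMeasure μ] (h0 : ∀ᵐ x ∂μ, 0 ≤ x) :
    Tendsto (ratioMean μ) atTop (𝓝 0) := by
  have hpt : ∀ x : ℝ, Tendsto (fun t : ℝ => x / (x + t)) atTop (𝓝 0) := fun x =>
    tendsto_const_nhds.div_atTop (tendsto_atTop_add_const_left _ x tendsto_id)
  have := tendsto_integral_filter_of_dominated_convergence (fun _ => 1)
    (Eventually.of_forall aestronglyMeasurable_div_add)
    ((eventually_gt_atTop 0).mono fun _ hs => h0.mono fun _ hx => norm_div_add_le_one hx hs)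
    (integrable_const 1) (ae_of_all μ hpt)
  rwa [integral_zero] at this

lemma strictAntiOn_ratioMean [IsFiniteMeasure μ] (h0 : ∀ᵐ x ∂μ, 0 ≤ x)
    (hpos : μ (Ioi 0) ≠ 0) :
    StrictAntiOn (ratioMean μ) (Ioi 0) := by
  intro s hs t ht hst
  rw [← sub_pos, ratioMean, ratioMean,
    ← integral_sub (integrable_div_add h0 hs) (integrable_div_add h0 ht)]
  refine (integral_pos_iff_support_of_nonneg_ae ?_
    ((integrable_div_add h0 hs).sub (integrable_div_add h0 ht))).2 ?_
  · exact h0.mono fun x hx => sub_nonneg.2 <|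
      div_le_div_of_nonneg_left hx (by linarith [hs.out]) (by linarith)
  · refine pos_iff_ne_zero.2 (mt (measure_mono_null fun x (hx : 0 < x) => ?_) hpos)
    exact (sub_pos.2 <| div_lt_div_of_pos_left hx (by linarith [hs.out]) (by linarith)).ne'

lemma existsUnique_ratioMean_eq [IsFiniteMeasure μ] (h0 : ∀ᵐ x ∂μ, 0 ≤ x) {c : ℝ}
    (hc0 : 0 < c) (hc : c < μ.real (Ioi 0)) : ∃! ρ, 0 < ρ ∧ ratioMean μ ρ = c := by
  obtain ⟨a, hac, ha⟩ := ((tendsto_ratioMean_nhdsGT_zero h0).eventually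
    (eventually_gt_nhds hc) |>.and eventually_mem_nhdsWithin).exists
  obtain ⟨b, hbc, hab⟩ := ((tendsto_ratioMean_atTop h0).eventually (eventually_lt_nhds hc0)
    |>.and (eventually_gt_atTop a)).exists
  obtain ⟨ρ, hρ, hρc⟩ := intermediate_value_Icc' hab.le
    ((continuousOn_ratioMean h0).mono fun t ht => lt_of_lt_of_le ha ht.1) ⟨hbc.le, hac.le⟩
  have hpos : μ (Ioi 0) ≠ 0 := fun h => by
    rw [measureReal_def, h, ENNReal.toReal_zero] at hc
    linarith
  exact ⟨ρ, ⟨lt_of_lt_of_le ha hρ.1, hρc⟩, fun ρ' hρ' =>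
    (strictAntiOn_ratioMean h0 hpos).injOn hρ'.1 (lt_of_lt_of_le ha hρ.1)
      (hρ'.2.trans hρc.symm)⟩

end RatioMean

section Minimiser

lemma div_mul_log_sub_log_le {x ρ r : ℝ} (hx : 0 ≤ x) (hρ : 0 < ρ) (hr : 0 < r) :
    ρ / (x + ρ) * (Real.log r - Real.log ρ) ≤ Real.log (x + r) - Real.log (x + ρ) := by
  have hxρ : 0 < x + ρ := by positivity
  have hconc := strictConcaveOn_log_Ioi.concaveOn.2 (mem_Ioi.2 one_pos)
    (mem_Ioi.2 (div_pos hr hρ)) (div_nonneg hx hxρ.le) (div_nonneg hρ.le hxρ.le)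
    (by rw [← add_div, div_self hxρ.ne'])
  have harg : (x / (x + ρ)) • (1 : ℝ) + (ρ / (x + ρ)) • (r / ρ) = (x + r) / (x + ρ) := by
    simp only [smul_eq_mul]
    field_simp
  rwa [harg, smul_eq_mul, smul_eq_mul, Real.log_one, mul_zero, zero_add,
    Real.log_div hr.ne' hρ.ne', Real.log_div (by positivity) hxρ.ne'] at hconc

variable {c : ℝ} {μ : Measure ℝ} [IsProbabilityMeasure μ]

lemma hsObjective_le_of_ratioMean_eq (h0 : ∀ᵐ x ∂μ, 0 ≤ x)
    (hint : Integrable (fun x => Real.log (1 + x)) μ) (hc0 : 0 < c) {ρ r : ℝ} (hρ : 0 < ρ)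
    (hr : 0 < r) (hρc : ratioMean μ ρ = c) : hsObjective c μ ρ ≤ hsObjective c μ r := by
  rw [← Real.log_le_log_iff (hsObjective_pos hρ) (hsObjective_pos hr), log_hsObjective hρ,
    log_hsObjective hr]
  refine mul_le_mul_of_nonneg_left ?_ (inv_nonneg.2 hc0.le)
  have hw : (fun x => ρ / (x + ρ)) =ᵐ[μ] fun x => 1 - x / (x + ρ) := h0.mono fun x hx => by
    have : x + ρ ≠ 0 := by positivity
    field_simp
    ring
  have hwint : Integrable (fun x => ρ / (x + ρ)) μ :=
    ((integrable_const 1).sub (integrable_div_add h0 hρ)).congr hw.symm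
  have hweight : ∫ x, ρ / (x + ρ) ∂μ = 1 - c := by
    rw [integral_congr_ae hw, integral_sub (integrable_const 1) (integrable_div_add h0 hρ),
      integral_const, probReal_univ, one_smul, ← hρc, ratioMean]
  have hdiff : Integrable (fun x => Real.log (x + r) - Real.log (x + ρ)) μ :=
    (integrable_log_add h0 hint hr).sub (integrable_log_add h0 hint hρ)
  have hmono := integral_mono_ae (hwint.mul_const (Real.log r - Real.log ρ)) hdiff
    (h0.mono fun x hx => div_mul_log_sub_log_le hx hρ hr)
  rw [integral_mul_const, hweight,
    integral_sub (integrable_log_add h0 hint hr) (integrable_log_add h0 hint hρ)] at hmono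
  linarith

end Minimiser

/-- the alternative formula for the HS barycenter, and the attainment of the
infimum in the subcritical case. -/
theorem hsBary_oldstyle (c : ℝ) (hc : c ∈ Set.Ioc (0 : ℝ) 1) (μ : Measure ℝ)
    [IsProbabilityMeasure μ] (hsupp : μ (Set.Iio 0) = 0)
    (hint : Integrable (fun x => Real.log (1 + x)) μ) :
    hsBary c μ =
      ENNReal.ofReal (hsB c *
        ⨅ r : {r : ℝ // 0 < r},
          (r : ℝ) ^ (-(1 - c) / c) * Real.exp (c⁻¹ * ∫ x, Real.log (x + r) ∂μ)) ∧
    (μ {0} < ENNReal.ofReal (1 - c) →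
      ∃ ρ : ℝ, 0 < ρ ∧ (∫ x, x / (x + ρ) ∂μ) = c ∧
        (∀ ρ' : ℝ, 0 < ρ' → (∫ x, x / (x + ρ') ∂μ) = c → ρ' = ρ) ∧
        ρ ^ (-(1 - c) / c) * Real.exp (c⁻¹ * ∫ x, Real.log (x + ρ) ∂μ) =
          ⨅ r : {r : ℝ // 0 < r},
            (r : ℝ) ^ (-(1 - c) / c) * Real.exp (c⁻¹ * ∫ x, Real.log (x + r) ∂μ)) := by
  have h0 := ae_le_of_measure_Iio_eq_zero hsupp
  refine ⟨hsBary_eq_ofReal_hsB_mul_iInf hc h0 hint, fun hμ0 => ?_⟩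
  have hcμ : c < μ.real (Ioi 0) := by
    have : μ.real {0} < 1 - c := ENNReal.toReal_lt_of_lt_ofReal hμ0
    rw [measureReal_Ioi_eq_one_sub hsupp]
    linarith
  obtain ⟨ρ, ⟨hρ, hρc⟩, huniq⟩ := existsUnique_ratioMean_eq h0 hc.1 hcμ
  refine ⟨ρ, hρ, hρc, fun ρ' hρ' hρ'c => huniq ρ' ⟨hρ', hρ'c⟩, ?_⟩
  have hbdd : BddBelow (range fun r : {r : ℝ // 0 < r} => hsObjective c μ r) :=
    ⟨0, by rintro _ ⟨r, rfl⟩; exact (hsObjective_pos r.2).le⟩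
  exact le_antisymm
    (le_ciInf fun r => hsObjective_le_of_ratioMean_eq h0 hint hc.1 hρ r.2 hρc)
    (ciInf_le hbdd ⟨ρ, hρ⟩)
end
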